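/- Let R be a *-reducing ring with involution and let p, q ∈ R be projections. Then the following are equivalent: (1) (1-p)(1-q) is Moore–Penrose invertible; (2) 1 - p - q is Moore–Penrose invertible; (3) pq is Moore–Penrose invertible. -/
import Mathlib


/-- `b` is a Moore–Penrose inverse of `a`. -/
def IsMPInv {R : Type*} [Ring R] [StarRing R] (a b : R) : Prop :=
  a * b * a = a ∧ b * a * b = b ∧ star (a * b) = a * b ∧ star (b * a) = b * a

/-- `a` is Moore–Penrose invertible. -/
def IsMPInvertible {R : Type*} [Ring R] [StarRing R] (a : R) : Prop :=
  ∃ b, IsMPInv a b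

/-- A projection: a self-adjoint idempotent. -/
def IsProjection {R : Type*} [Ring R] [StarRing R] (p : R) : Prop :=
  p * p = p ∧ star p = p

/-- A `*`-reducing ring: `a* a = 0` implies `a = 0`. -/
def IsStarReducing (R : Type*) [Ring R] [StarRing R] : Prop :=
  ∀ a : R, star a * a = 0 → a = 0

section lemmas
variable {R : Type*} [Ring R] [StarRing R]

variable {R : Type*} [Ring R] [StarRing R]

lemma mp_star {a x : R} (h : IsMPInv a x) : IsMPInv (star a) (star x) := by
  obtain ⟨h1, h2, h3, h4⟩ := h
  refine ⟨?_, ?_, ?_, ?_⟩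
  · rw [← star_mul, ← star_mul, show a * (x * a) = a from by rw [← mul_assoc, h1]]
  · rw [← star_mul, ← star_mul, show x * (a * x) = x from by rw [← mul_assoc, h2]]
  · rw [← star_mul, star_star, h4]
  · rw [← star_mul, star_star, h3]

lemma mp_staramul {a x : R} (h : IsMPInv a x) : IsMPInv (star a * a) (x * star x) := by
  obtain ⟨h1, h2, h3, h4⟩ := h
  have hax : star x * star a = a * x := by rw [← star_mul, h3]
  have hxa : star a * star x = x * a := by rw [← star_mul, h4]
  have key : star a * a * (x * star x) = x * a := by
    calc star a * a * (x * star x) = star a * (a * x) * star x := by noncomm_ring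
    _ = star a * (star x * star a) * star x := by rw [hax]
    _ = (star a * star x) * (star a * star x) := by noncomm_ring
    _ = (x * a) * (x * a) := by rw [hxa]
    _ = (x * a * x) * a := by noncomm_ring
    _ = x * a := by rw [h2]
  have key2 : (x * star x) * (star a * a) = x * a := by
    calc (x * star x) * (star a * a) = x * (star x * star a) * a := by noncomm_ring
    _ = x * (a * x) * a := by rw [hax]
    _ = (x * a * x) * a := by noncomm_ring
    _ = x * a := by rw [h2]
  refine ⟨?_, ?_, ?_, ?_⟩
  · calc star a * a * (x * star x) * (star a * a) = (x * a) * (star a * a) := by rw [key]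
    _ = (star a * star x) * (star a * a) := by rw [hxa]
    _ = star a * ((star x * star a) * a) := by noncomm_ring
    _ = star a * ((a * x) * a) := by rw [hax]
    _ = star a * a := by rw [show a * x * a = a from h1]
  · calc x * star x * (star a * a) * (x * star x) = (x * a) * (x * star x) := by rw [key2]
    _ = (x * a * x) * star x := by noncomm_ring
    _ = x * star x := by rw [h2]
  · rw [key, h4]
  · rw [key2, h4]

lemma mp_sa {w x : R} (hw : star w = w) (h : IsMPInv w x) :
    ∃ y, IsMPInv w y ∧ star y = y ∧ w * y = y * w := by
  obtain ⟨h1, h2, h3, h4⟩ := h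
  have hxw : star x * w = w * x := by
    conv_lhs => rw [← hw]
    rw [← star_mul, h3]
  have hwx : w * star x = x * w := by
    conv_lhs => rw [← hw]
    rw [← star_mul, h4]
  have h5 : star (w * star x * w) = w := by
    rw [star_mul, star_mul, star_star, hw, ← mul_assoc, h1]
  have hwxw : w * star x * w = w := by
    conv_lhs => rw [← star_star (w * star x * w)]
    rw [h5, hw]
  have hwy : w * (star x * w * x) = w * x := by
    calc w * (star x * w * x) = (w * star x * w) * x := by noncomm_ring
    _ = w * x := by rw [hwxw]
  have hyw : (star x * w * x) * w = w * x := by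
    calc (star x * w * x) * w = star x * (w * x * w) := by noncomm_ring
    _ = star x * w := by rw [h1]
    _ = w * x := hxw
  refine ⟨star x * w * x, ⟨?_, ?_, ?_, ?_⟩, ?_, ?_⟩
  · calc w * (star x * w * x) * w = (w * star x * w) * (x * w) := by noncomm_ring
    _ = w * (x * w) := by rw [hwxw]
    _ = w := by rw [← mul_assoc, h1]
  · calc (star x * w * x) * w * (star x * w * x)
        = star x * ((w * x * w) * (star x * (w * x))) := by noncomm_ring
    _ = star x * (w * (star x * (w * x))) := by rw [h1]
    _ = star x * ((w * star x * w) * x) := by noncomm_ring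
    _ = star x * (w * x) := by rw [hwxw]
    _ = star x * w * x := by rw [mul_assoc]
  · rw [hwy, h3]
  · rw [hyw, h3]
  · rw [star_mul, star_mul, star_star, hw, mul_assoc]
  · rw [hwy, hyw]

lemma mp_of_staramul (hR : IsStarReducing R) {a : R} (h : IsMPInvertible (star a * a)) :
    IsMPInvertible a := by
  obtain ⟨x, hx⟩ := h
  have hw : star (star a * a) = star a * a := by rw [star_mul, star_star]
  obtain ⟨y, ⟨h1, h2, h3, h4⟩, hy, hcomm⟩ := mp_sa hw hx
  have key : a * (y * (star a * a)) = a := by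
    have h0 : star (a * (y * (star a * a)) - a) * (a * (y * (star a * a)) - a) = 0 := by
      have e1 : star (a * (y * (star a * a))) = y * (star a * a) * star a := by
        rw [star_mul, star_mul, hy, hw, hcomm]
      rw [star_sub, e1]
      have e2 : (y * (star a * a) * star a - star a) * (a * (y * (star a * a)) - a)
          = (y * ((star a * a) * ((star a * a) * y * (star a * a)))
             - y * ((star a * a) * (star a * a)))
            - ((star a * a) * y * (star a * a) - (star a * a)) := by noncomm_ring
      rw [e2, h1]
      noncomm_ring
    exact sub_eq_zero.mp (hR _ h0)
  refine ⟨y * star a, ?_, ?_, ?_, ?_⟩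
  · calc a * (y * star a) * a = a * (y * (star a * a)) := by noncomm_ring
    _ = a := key
  · calc y * star a * a * (y * star a) = (y * (star a * a) * y) * star a := by noncomm_ring
    _ = y * star a := by rw [h2]
  · rw [star_mul, star_mul, star_star, hy, mul_assoc]
  · have t : star (y * star a * a) = star a * a * y := by
      rw [star_mul, star_mul, star_star, hy, ← mul_assoc]
    rw [t, hcomm, ← mul_assoc]

lemma mp_add {s t : R} (hs : star s = s) (ht : star t = t) (hst : s * t = 0)
    (hts : t * s = 0) (h1 : IsMPInvertible s) (h2 : IsMPInvertible t) :
    IsMPInvertible (s + t) := by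
  obtain ⟨x, hx⟩ := h1
  obtain ⟨x', hx'⟩ := h2
  obtain ⟨y, ⟨h1s, h2s, h3s, h4s⟩, hys, hcs⟩ := mp_sa hs hx
  obtain ⟨z, ⟨h1t, h2t, h3t, h4t⟩, hzt, hct⟩ := mp_sa ht hx'
  -- hcs : s * y = y * s, hct : t * z = z * t
  have hyt : y * t = 0 := by
    calc y * t = (y * s * y) * t := by rw [h2s]
    _ = y * (s * y) * t := by noncomm_ring
    _ = y * (y * s) * t := by rw [hcs]
    _ = y * y * (s * t) := by noncomm_ring
    _ = 0 := by rw [hst, mul_zero]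
  have hty : t * y = 0 := by
    calc t * y = t * (y * s * y) := by rw [h2s]
    _ = t * (y * s * y) := by noncomm_ring
    _ = t * (s * y * y) := by rw [← hcs]
    _ = t * s * (y * y) := by noncomm_ring
    _ = 0 := by rw [hts, zero_mul]
  have hzs : z * s = 0 := by
    calc z * s = (z * t * z) * s := by rw [h2t]
    _ = z * (t * z) * s := by noncomm_ring
    _ = z * (z * t) * s := by rw [hct]
    _ = z * z * (t * s) := by noncomm_ring
    _ = 0 := by rw [hts, mul_zero]
  have hsz : s * z = 0 := by
    calc s * z = s * (z * t * z) := by rw [h2t]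
    _ = s * (z * t * z) := by noncomm_ring
    _ = s * (t * z * z) := by rw [← hct]
    _ = s * t * (z * z) := by noncomm_ring
    _ = 0 := by rw [hst, zero_mul]
  have hA : (s + t) * (y + z) = s * y + t * z := by
    rw [add_mul, mul_add, mul_add, hsz, hty, add_zero, zero_add]
  have hB : (y + z) * (s + t) = y * s + z * t := by
    rw [add_mul, mul_add, mul_add, hyt, hzs, add_zero, zero_add]
  refine ⟨y + z, ?_, ?_, ?_, ?_⟩
  · rw [hA]
    have c1 : (s * y + t * z) * (s + t) = s * y * s + t * z * t + (s * (y * t) + t * (z * s)) := by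
      noncomm_ring
    rw [c1, hyt, hzs, mul_zero, mul_zero, add_zero, add_zero, h1s, h1t]
  · rw [hB]
    have c1 : (y * s + z * t) * (y + z) = y * s * y + z * t * z + (y * (s * z) + z * (t * y)) := by
      noncomm_ring
    rw [c1, hsz, hty, mul_zero, mul_zero, add_zero, add_zero, h2s, h2t]
  · rw [hA, star_add]
    have e1 : star (s * y) = s * y := by rw [star_mul, hys, hs, ← hcs]
    have e2 : star (t * z) = t * z := by rw [star_mul, hzt, ht, ← hct]
    rw [e1, e2]
  · rw [hB, star_add]
    have e1 : star (y * s) = y * s := by rw [star_mul, hys, hs, hcs]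
    have e2 : star (z * t) = z * t := by rw [star_mul, hzt, ht, hct]
    rw [e1, e2]

lemma mp_corner {u q : R} (hu : star u = u) (hq1 : q * q = q) (hq2 : star q = q)
    (hcomm : q * u = u * q) (h : IsMPInvertible u) : IsMPInvertible (u * q) := by
  obtain ⟨x, hx⟩ := h
  obtain ⟨m, ⟨h1, h2, h3, h4⟩, hm, hcm⟩ := mp_sa hu hx
  -- hcm : u * m = m * u
  have he : star (u * m) = u * m := by rw [star_mul, hm, hu, ← hcm]
  have step1 : u * m * (q * u) = q * u := by
    calc u * m * (q * u) = u * m * (u * q) := by rw [hcomm]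
    _ = (u * m * u) * q := by noncomm_ring
    _ = u * q := by rw [h1]
    _ = q * u := hcomm.symm
  have hqe : q * (u * m) = u * m * (q * (u * m)) := by
    calc q * (u * m) = (q * u) * m := by rw [← mul_assoc]
    _ = (u * m * (q * u)) * m := by rw [step1]
    _ = u * m * (q * (u * m)) := by noncomm_ring
  have hsq : star (q * (u * m)) = u * m * q := by rw [star_mul, he, hq2]
  have heq : u * m * q = q * (u * m) := by
    calc u * m * q = star (q * (u * m)) := hsq.symm
    _ = star (u * m * (q * (u * m))) := by rw [← hqe]
    _ = star (q * (u * m)) * star (u * m) := by rw [star_mul]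
    _ = u * m * q * (u * m) := by rw [hsq, he]
    _ = u * m * (q * (u * m)) := by rw [mul_assoc]
    _ = q * (u * m) := by rw [← hqe]
  have hmum : m * (u * m) = m := by rw [← mul_assoc, h2]
  have hz : (q * m - m * q) * u = 0 := by
    rw [sub_mul]
    have t1 : q * m * u = q * (u * m) := by rw [mul_assoc, ← hcm]
    have t2 : m * q * u = q * (u * m) := by
      calc m * q * u = m * (q * u) := by rw [mul_assoc]
      _ = m * (u * q) := by rw [hcomm]
      _ = (m * u) * q := by rw [← mul_assoc]
      _ = (u * m) * q := by rw [← hcm]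
      _ = q * (u * m) := heq
    rw [t1, t2, sub_self]
  have hqm : q * m = m * q := by
    have e3 : (q * m - m * q) * (u * m) = q * m - m * q := by
      rw [sub_mul]
      have t3 : q * m * (u * m) = q * m := by rw [mul_assoc, hmum]
      have t4 : m * q * (u * m) = m * q := by
        calc m * q * (u * m) = m * (q * (u * m)) := by rw [mul_assoc]
        _ = m * (u * m * q) := by rw [← heq]
        _ = (m * (u * m)) * q := by noncomm_ring
        _ = m * q := by rw [hmum]
      rw [t3, t4]
    have e4 : (q * m - m * q) * (u * m) = 0 := by rw [← mul_assoc, hz, zero_mul]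
    have : q * m - m * q = 0 := by rw [← e3, e4]
    exact sub_eq_zero.mp this
  -- now the corner inverse
  have l1 : ∀ x : R, q * (u * x) = u * (q * x) := fun x => by
    rw [← mul_assoc, hcomm, mul_assoc]
  have l2 : ∀ x : R, q * (m * x) = m * (q * x) := fun x => by
    rw [← mul_assoc, hqm, mul_assoc]
  have l3 : ∀ x : R, q * (q * x) = q * x := fun x => by rw [← mul_assoc, hq1]
  refine ⟨m * q, ?_, ?_, ?_, ?_⟩
  · have e : u * q * (m * q) * (u * q) = (u * m * u) * q := by
      simp only [mul_assoc, l1, l2, l3, hq1, hqm, hcomm]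
    rw [e, h1]
  · have e : m * q * (u * q) * (m * q) = (m * u * m) * q := by
      simp only [mul_assoc, l1, l2, l3, hq1, hqm, hcomm]
    rw [e, h2]
  · have e : u * q * (m * q) = u * m * q := by
      simp only [mul_assoc, l1, l2, l3, hq1, hqm, hcomm]
    rw [e, star_mul, hq2, he]
    exact heq.symm
  · have e2 : m * q * (u * q) = m * u * q := by
      simp only [mul_assoc, l1, l2, l3, hq1, hqm, hcomm]
    rw [e2, star_mul, star_mul, hq2, hu, hm, ← heq, hcm]

lemma mp_key (p q d : R) (hp : IsProjection p) (hq : IsProjection q)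
    (hd : IsMPInv (p * q) d) :
    IsMPInv ((1 - p) * (1 - q)) ((1 - q) * (1 - star d) * (1 - p)) := by
  obtain ⟨hp1, hp2⟩ := hp
  obtain ⟨hq1, hq2⟩ := hq
  obtain ⟨h1, h2, h3, h4⟩ := hd
  have hB : q * p * star d = d * (p * q) := by
    rw [← h4, star_mul, star_mul, hp2, hq2]
  have hC : star d * (q * p) = p * q * d := by
    rw [← h3, star_mul, star_mul, hp2, hq2]
  have hd' : d = q * p * star d * d := by
    conv_lhs => rw [← h2, ← hB]
  have hqd : q * d = d := by
    calc q * d = q * (q * p * star d * d) := by rw [← hd']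
    _ = q * q * p * star d * d := by noncomm_ring
    _ = q * p * star d * d := by rw [hq1]
    _ = d := hd'.symm
  have hd'' : d = d * (star d * (q * p)) := by
    conv_lhs => rw [← h2, mul_assoc, ← hC]
  have hdp : d * p = d := by
    calc d * p = d * (star d * (q * p)) * p := by rw [← hd'']
    _ = d * (star d * (q * (p * p))) := by noncomm_ring
    _ = d * (star d * (q * p)) := by rw [hp1]
    _ = d := hd''.symm
  have hdd : d * d = d := by
    calc d * d = (d * p) * (q * d) := by rw [hdp, hqd]
    _ = d * (p * q) * d := by noncomm_ring
    _ = d := h2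
  have hpe : p * star d = star d := by rw [← hp2, ← star_mul, hdp]
  have heq : star d * q = star d := by rw [← hq2, ← star_mul, hqd]
  have hee : star d * star d = star d := by rw [← star_mul, hdd]
  -- self-adjointness of p*d and d*q
  have hpd' : p * d = p * q * d := by
    conv_rhs => rw [mul_assoc, hqd]
  have hpd_sa : star (p * d) = p * d := by rw [hpd', h3]
  have hep : star d * p = p * d := by
    conv_lhs => rw [← hp2]
    rw [← star_mul, hpd_sa]
  have hdq' : d * q = d * (p * q) := by
    conv_lhs => rw [← hdp, mul_assoc]
  have hdq_sa : star (d * q) = d * q := by rw [hdq', h4]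
  have hqe : q * star d = d * q := by
    conv_lhs => rw [← hq2]
    rw [← star_mul, hdq_sa]
  -- three-letter rules
  have hpdq : p * d * q = p * q := by
    have t : p * q * d = p * d := by rw [mul_assoc, hqd]
    have t2 : p * d * (p * q) = p * q := by rw [← t]; exact h1
    have t3 : p * d * (p * q) = p * d * q := by
      calc p * d * (p * q) = p * (d * p) * q := by noncomm_ring
      _ = p * d * q := by rw [hdp]
    rw [← t3]; exact t2
  have hepq : star d * (p * q) = p * q := by
    calc star d * (p * q) = (star d * p) * q := by rw [← mul_assoc]
    _ = (p * d) * q := by rw [hep]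
    _ = p * q := hpdq
  have hqpd : q * p * d = q * p := by
    have t : star (star d * (p * q)) = q * p * d := by
      rw [star_mul, star_mul, star_star, hp2, hq2]
    rw [← t, hepq, star_mul, hp2, hq2]
  have hdqp : d * (q * p) = q * p := by
    calc d * (q * p) = (d * q) * p := by rw [← mul_assoc]
    _ = (q * star d) * p := by rw [← hqe]
    _ = q * (p * d) := by rw [mul_assoc, hep]
    _ = q * p * d := by rw [← mul_assoc]
    _ = q * p := hqpd
  have hpqe : p * q * star d = p * q := by
    have t : star (d * (q * p)) = p * q * star d := by
      rw [star_mul, star_mul, hp2, hq2]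
    rw [← t, hdqp, star_mul, hp2, hq2]
  have hpde : p * (d * star d) = star d := by
    have t : star (p * (d * star d)) = d := by
      rw [star_mul, star_mul, star_star, hp2, mul_assoc, hep, ← mul_assoc, hdp, hdd]
    conv_lhs => rw [← star_star (p * (d * star d))]
    rw [t]
  have hedq : star d * (d * q) = star d := by
    have t : star (star d * (d * q)) = d := by
      rw [star_mul, star_mul, star_star, hq2, hqe, mul_assoc, hqd, hdd]
    conv_lhs => rw [← star_star (star d * (d * q))]
    rw [t]
  have hqed : q * (star d * d) = d := by
    rw [← mul_assoc, hqe, mul_assoc, hqd, hdd]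
  have hdep : d * (star d * p) = d := by
    rw [hep, ← mul_assoc, hdp, hdd]
  -- flat versions
  have hpdq_r : p * (d * q) = p * q := by rw [← mul_assoc, hpdq]
  have hqpd_r : q * (p * d) = q * p := by rw [← mul_assoc, hqpd]
  have hpqe_r : p * (q * star d) = p * q := by rw [← mul_assoc, hpqe]
  -- applied versions
  have r_pp : ∀ x : R, p * (p * x) = p * x := fun x => by rw [← mul_assoc, hp1]
  have r_qq : ∀ x : R, q * (q * x) = q * x := fun x => by rw [← mul_assoc, hq1]
  have r_dd : ∀ x : R, d * (d * x) = d * x := fun x => by rw [← mul_assoc, hdd]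
  have r_ee : ∀ x : R, star d * (star d * x) = star d * x := fun x => by rw [← mul_assoc, hee]
  have r_dp : ∀ x : R, d * (p * x) = d * x := fun x => by rw [← mul_assoc, hdp]
  have r_qd : ∀ x : R, q * (d * x) = d * x := fun x => by rw [← mul_assoc, hqd]
  have r_pe : ∀ x : R, p * (star d * x) = star d * x := fun x => by rw [← mul_assoc, hpe]
  have r_eq : ∀ x : R, star d * (q * x) = star d * x := fun x => by rw [← mul_assoc, heq]
  have r_ep : ∀ x : R, star d * (p * x) = p * (d * x) := fun x => by
    rw [← mul_assoc, hep, mul_assoc]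
  have r_qe : ∀ x : R, q * (star d * x) = d * (q * x) := fun x => by
    rw [← mul_assoc, hqe, mul_assoc]
  have r_pdq : ∀ x : R, p * (d * (q * x)) = p * (q * x) := fun x => by
    rw [← mul_assoc, ← mul_assoc, hpdq, mul_assoc]
  have r_dqp : ∀ x : R, d * (q * (p * x)) = q * (p * x) := fun x => by
    rw [← mul_assoc, ← mul_assoc, show d * q * p = q * p from by rw [mul_assoc, hdqp], mul_assoc]
  have r_pqe : ∀ x : R, p * (q * (star d * x)) = p * (q * x) := fun x => by
    rw [← mul_assoc, ← mul_assoc, hpqe, mul_assoc]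
  have r_qpd : ∀ x : R, q * (p * (d * x)) = q * (p * x) := fun x => by
    rw [← mul_assoc, ← mul_assoc, hqpd, mul_assoc]
  have r_pde : ∀ x : R, p * (d * (star d * x)) = star d * x := fun x => by
    rw [← mul_assoc, ← mul_assoc, show p * d * star d = star d from by rw [mul_assoc, hpde]]
  have r_edq : ∀ x : R, star d * (d * (q * x)) = star d * x := fun x => by
    rw [← mul_assoc, ← mul_assoc, show star d * d * q = star d from by rw [mul_assoc, hedq]]
  have r_qed : ∀ x : R, q * (star d * (d * x)) = d * x := fun x => by
    rw [← mul_assoc, ← mul_assoc, show q * star d * d = d from by rw [mul_assoc, hqed]]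
  have r_dep : ∀ x : R, d * (star d * (p * x)) = d * x := fun x => by
    rw [← mul_assoc, ← mul_assoc, show d * star d * p = d from by rw [mul_assoc, hdep]]
  refine ⟨?_, ?_, ?_, ?_⟩
  · simp only [mul_sub, sub_mul, mul_one, one_mul, mul_assoc]
    simp only [r_pp, r_qq, r_dd, r_ee, r_dp, r_qd, r_pe, r_eq, r_ep, r_qe, r_pdq, r_dqp,
      r_pqe, r_qpd, r_pde, r_edq, r_qed, r_dep,
      hp1, hq1, hdd, hee, hdp, hqd, hpe, heq, hep, hqe, hpdq_r, hqpd_r, hpqe_r,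
      hdqp, hpde, hedq, hqed, hdep]
    abel
  · simp only [mul_sub, sub_mul, mul_one, one_mul, mul_assoc]
    simp only [r_pp, r_qq, r_dd, r_ee, r_dp, r_qd, r_pe, r_eq, r_ep, r_qe, r_pdq, r_dqp,
      r_pqe, r_qpd, r_pde, r_edq, r_qed, r_dep,
      hp1, hq1, hdd, hee, hdp, hqd, hpe, heq, hep, hqe, hpdq_r, hqpd_r, hpqe_r,
      hdqp, hpde, hedq, hqed, hdep]
    abel
  · simp only [star_sub, star_mul, star_one, star_star, hp2, hq2]
    simp only [mul_sub, sub_mul, mul_one, one_mul, mul_assoc]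
    simp only [r_pp, r_qq, r_dd, r_ee, r_dp, r_qd, r_pe, r_eq, r_ep, r_qe, r_pdq, r_dqp,
      r_pqe, r_qpd, r_pde, r_edq, r_qed, r_dep,
      hp1, hq1, hdd, hee, hdp, hqd, hpe, heq, hep, hqe, hpdq_r, hqpd_r, hpqe_r,
      hdqp, hpde, hedq, hqed, hdep]
    abel
  · simp only [star_sub, star_mul, star_one, star_star, hp2, hq2]
    simp only [mul_sub, sub_mul, mul_one, one_mul, mul_assoc]
    simp only [r_pp, r_qq, r_dd, r_ee, r_dp, r_qd, r_pe, r_eq, r_ep, r_qe, r_pdq, r_dqp,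
      r_pqe, r_qpd, r_pde, r_edq, r_qed, r_dep,
      hp1, hq1, hdd, hee, hdp, hqd, hpe, heq, hep, hqe, hpdq_r, hqpd_r, hpqe_r,
      hdqp, hpde, hedq, hqed, hdep]
    abel


end lemmas

theorem stmt_14 {R : Type*} [Ring R] [StarRing R] (hR : IsStarReducing R) (p q : R)
    (hp : IsProjection p) (hq : IsProjection q) :
    List.TFAE
      [IsMPInvertible ((1 - p) * (1 - q)),
       IsMPInvertible (1 - p - q),
       IsMPInvertible (p * q)] := by
  have rpp : ∀ x : R, p * (p * x) = p * x := fun x => by rw [← mul_assoc, hp.1]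
  have rqq : ∀ x : R, q * (q * x) = q * x := fun x => by rw [← mul_assoc, hq.1]
  have hp' : IsProjection (1 - p) := by
    constructor
    · rw [sub_mul, one_mul, mul_sub, mul_one, hp.1, sub_self, sub_zero]
    · rw [star_sub, star_one, hp.2]
  have hq' : IsProjection (1 - q) := by
    constructor
    · rw [sub_mul, one_mul, mul_sub, mul_one, hq.1, sub_self, sub_zero]
    · rw [star_sub, star_one, hq.2]
  tfae_have 3 → 1 := by
    rintro ⟨d, hd⟩
    exact ⟨_, mp_key p q d hp hq hd⟩
  tfae_have 1 → 3 := by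
    rintro ⟨d, hd⟩
    have h := mp_key (1 - p) (1 - q) d hp' hq' hd
    rw [sub_sub_cancel, sub_sub_cancel] at h
    exact ⟨_, h⟩
  tfae_have 3 → 2 := by
    rintro ⟨d, hd⟩
    have hbc := mp_key p q d hp hq hd
    have winv : IsMPInvertible (star (p * q) * (p * q)) := ⟨_, mp_staramul hd⟩
    have vinv : IsMPInvertible
        (star ((1 - p) * (1 - q)) * ((1 - p) * (1 - q))) := ⟨_, mp_staramul hbc⟩
    have hs : star (star (p * q) * (p * q)) = star (p * q) * (p * q) := by
      rw [star_mul, star_star]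
    have ht : star (star ((1 - p) * (1 - q)) * ((1 - p) * (1 - q)))
        = star ((1 - p) * (1 - q)) * ((1 - p) * (1 - q)) := by
      rw [star_mul, star_star]
    have hst : (star (p * q) * (p * q)) * (star ((1 - p) * (1 - q)) * ((1 - p) * (1 - q))) = 0 := by
      simp only [star_mul, star_sub, star_one, hp.2, hq.2]
      simp only [mul_sub, sub_mul, mul_one, one_mul, mul_assoc]
      simp only [rpp, rqq, hp.1, hq.1]
      abel
    have hts : (star ((1 - p) * (1 - q)) * ((1 - p) * (1 - q))) * (star (p * q) * (p * q)) = 0 := by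
      simp only [star_mul, star_sub, star_one, hp.2, hq.2]
      simp only [mul_sub, sub_mul, mul_one, one_mul, mul_assoc]
      simp only [rpp, rqq, hp.1, hq.1]
      abel
    have hsum := mp_add hs ht hst hts winv vinv
    apply mp_of_staramul hR (a := 1 - p - q)
    have hE : star (1 - p - q) * (1 - p - q)
        = star (p * q) * (p * q) + star ((1 - p) * (1 - q)) * ((1 - p) * (1 - q)) := by
      simp only [star_mul, star_sub, star_one, hp.2, hq.2]
      simp only [mul_sub, sub_mul, mul_one, one_mul, mul_assoc]
      simp only [rpp, rqq, hp.1, hq.1]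
      abel
    rw [hE]
    exact hsum
  tfae_have 2 → 3 := by
    rintro ⟨m, hm⟩
    have n2inv : IsMPInvertible (star (1 - p - q) * (1 - p - q)) := ⟨_, mp_staramul hm⟩
    have hu : star (star (1 - p - q) * (1 - p - q)) = star (1 - p - q) * (1 - p - q) := by
      rw [star_mul, star_star]
    have hcommq : q * (star (1 - p - q) * (1 - p - q)) = (star (1 - p - q) * (1 - p - q)) * q := by
      simp only [star_mul, star_sub, star_one, hp.2, hq.2]
      simp only [mul_sub, sub_mul, mul_one, one_mul, mul_assoc]
      simp only [rpp, rqq, hp.1, hq.1]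
      abel
    have corner := mp_corner hu hq.1 hq.2 hcommq n2inv
    apply mp_of_staramul hR (a := p * q)
    have hE2 : star (p * q) * (p * q) = (star (1 - p - q) * (1 - p - q)) * q := by
      simp only [star_mul, star_sub, star_one, hp.2, hq.2]
      simp only [mul_sub, sub_mul, mul_one, one_mul, mul_assoc]
      simp only [rpp, rqq, hp.1, hq.1]
      abel
    rw [hE2]
    exact corner
  tfae_finish
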